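/- Specializing the Gamma continued fraction to α = 1, ξ = 1: K_{n=1}^∞ ((n+1)(1−2n))/(3n+3) = −2 + Γ(3/2)·Γ(1/2)/Γ(1) = −2 + π/2; i.e., the continued fraction with b_n = (n+1)(1−2n) and a_n = 3n+3 converges to π/2 − 2. -/

import Mathlib

/-!
The convergents `p n / q n` of a continued fraction obey the three-term recurrence
`X (n + 2) = a (n + 2) * X (n + 1) + b (n + 2) * X n`, provided no tail of a finite approximant
produces a zero denominator. For `b n = (n + 1)(1 - 2n)`, `a n = 3n + 3` one solution is
`q n = (n + 1) (2n + 1)‼`, and `p n / q n = ∑_{m<n} t m + 2 t n - 2` with `t m = m! / (2m + 1)‼`;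
all tails stay above `-(n + 2)`, where the denominators are positive.

Euler's series `∑ t m = π / 2` comes from Wallis' integral after substituting `u = cos x`:
`t m = ½ ∫_{-1}^{1} ((1 - u²) / 2)^m du`, and summing the geometric series under the integral
leaves `∫_{-1}^{1} du / (1 + u²) = π / 2`. As `t n → 0`, the convergents tend to `π / 2 - 2`.
-/

open Real Filter

/-- Finite continued fraction approximant of depth `N`:
`cf b a N = b 1 / (a 1 + b 2 / (a 2 + ... + b N / a N))`. -/
noncomputable def cf (b a : ℕ → ℝ) (N : ℕ) : ℝ :=
  (List.range N).foldr (fun i acc => b (i + 1) / (a (i + 1) + acc)) 0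

open Finset

noncomputable def cfTail (b a : ℕ → ℝ) (N : ℕ) (x : ℝ) : ℝ :=
  (List.range N).foldr (fun i acc => b (i + 1) / (a (i + 1) + acc)) x

section Convergents

variable (b a p q : ℕ → ℝ)

theorem cf_eq_cfTail (N : ℕ) : cf b a N = cfTail b a N 0 := rfl

theorem cfTail_succ (N : ℕ) (x : ℝ) :
    cfTail b a (N + 1) x = cfTail b a N (b (N + 1) / (a (N + 1) + x)) := by
  rw [cfTail, List.range_succ, List.foldr_append]
  rfl

variable {b a p q}

theorem cfTail_eq_of_recurrence (hp0 : p 0 = 0) (hq0 : q 0 = 1) (hp1 : p 1 = b 1)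
    (hq1 : q 1 = a 1)
    (hp : ∀ n, p (n + 2) = a (n + 2) * p (n + 1) + b (n + 2) * p n)
    (hq : ∀ n, q (n + 2) = a (n + 2) * q (n + 1) + b (n + 2) * q n)
    -- `S N` holds the admissible tails appended after level `N + 1`
    (S : ℕ → Set ℝ)
    (hS : ∀ N, ∀ x ∈ S (N + 1), a (N + 2) + x ≠ 0 ∧ b (N + 2) / (a (N + 2) + x) ∈ S N)
    (hden : ∀ N, ∀ x ∈ S N, q (N + 1) + q N * x ≠ 0) :
    ∀ N, ∀ x ∈ S N, cfTail b a (N + 1) x = (p (N + 1) + p N * x) / (q (N + 1) + q N * x) := by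
  intro N
  induction N with
  | zero =>
    intro x _
    simp [cfTail, hp0, hq0, hp1, hq1]
  | succ N ih =>
    intro x hx
    obtain ⟨hax, hy⟩ := hS N x hx
    have hyx : b (N + 2) / (a (N + 2) + x) * (a (N + 2) + x) = b (N + 2) :=
      div_mul_cancel₀ _ hax
    rw [cfTail_succ, ih _ hy, div_eq_div_iff (hden N _ hy) (hden (N + 1) x hx), hp, hq]
    linear_combination (p N * q (N + 1) - p (N + 1) * q N) * hyx

theorem cf_eq_div_of_recurrence (hp0 : p 0 = 0) (hq0 : q 0 = 1) (hp1 : p 1 = b 1)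
    (hq1 : q 1 = a 1)
    (hp : ∀ n, p (n + 2) = a (n + 2) * p (n + 1) + b (n + 2) * p n)
    (hq : ∀ n, q (n + 2) = a (n + 2) * q (n + 1) + b (n + 2) * q n)
    (S : ℕ → Set ℝ) (hS0 : ∀ N, (0 : ℝ) ∈ S N)
    (hS : ∀ N, ∀ x ∈ S (N + 1), a (N + 2) + x ≠ 0 ∧ b (N + 2) / (a (N + 2) + x) ∈ S N)
    (hden : ∀ N, ∀ x ∈ S N, q (N + 1) + q N * x ≠ 0) (N : ℕ) :
    cf b a N = p N / q N := by
  cases N with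
  | zero => simp [cf, hp0]
  | succ N =>
    rw [cf_eq_cfTail]
    simpa using cfTail_eq_of_recurrence hp0 hq0 hp1 hq1 hp hq S hS hden N 0 (hS0 N)

end Convergents

-- `eulerTerm m = m! / (2m + 1)‼`
noncomputable def eulerTerm (m : ℕ) : ℝ := ∏ i ∈ range m, ((i : ℝ) + 1) / (2 * i + 3)

theorem eulerTerm_succ (m : ℕ) : eulerTerm (m + 1) = eulerTerm m * ((m + 1) / (2 * m + 3)) :=
  prod_range_succ _ _

theorem eulerTerm_eq_integral (m : ℕ) :
    eulerTerm m = ∫ u in (-1 : ℝ)..1, ((1 - u ^ 2) / 2) ^ m / 2 := by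
  have hsin := integral_sin_pow_odd_mul_cos_pow (a := 0) (b := π) m 0
  simp only [pow_zero, mul_one, one_mul, cos_zero, cos_pi, integral_sin_pow_odd] at hsin
  have hprod : ∏ i ∈ range m, (2 * (i : ℝ) + 2) / (2 * i + 3) = 2 ^ m * eulerTerm m := by
    rw [eulerTerm, show (2 : ℝ) ^ m = ∏ _i ∈ range m, (2 : ℝ) by simp, ← prod_mul_distrib]
    refine prod_congr rfl fun i _ => ?_
    ring
  simp only [div_pow, intervalIntegral.integral_div, ← hsin, hprod]
  field_simp

theorem hasSum_eulerTerm : HasSum eulerTerm (π / 2) := by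
  have hr : ∀ u ∈ Set.uIoc (-1 : ℝ) 1,
      0 ≤ (1 - u ^ 2) / 2 ∧ (1 - u ^ 2) / 2 ≤ 1 / 2 := by
    intro u hu
    rw [Set.uIoc_of_le (by norm_num)] at hu
    constructor <;> nlinarith [hu.1, hu.2, sq_nonneg u]
  have hbound : ∀ m, ∀ u ∈ Set.uIoc (-1 : ℝ) 1,
      ‖((1 - u ^ 2) / 2) ^ m / 2‖ ≤ (1 / 2) ^ m / 2 := by
    intro m u hu
    rw [Real.norm_of_nonneg (div_nonneg (pow_nonneg (hr u hu).1 m) zero_le_two)]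
    exact div_le_div_of_nonneg_right (pow_le_pow_left₀ (hr u hu).1 (hr u hu).2 m)
      zero_le_two
  have hgeom : ∀ u ∈ Set.uIoc (-1 : ℝ) 1,
      HasSum (fun m => ((1 - u ^ 2) / 2) ^ m / 2) (1 / (1 + u ^ 2)) := by
    intro u hu
    have h := (hasSum_geometric_of_lt_one (hr u hu).1 (by linarith [(hr u hu).2])).div_const 2
    rwa [show 1 - (1 - u ^ 2) / 2 = (1 + u ^ 2) / 2 by ring, inv_div,
      div_div_cancel_left' two_ne_zero, inv_eq_one_div] at h
  have h := intervalIntegral.hasSum_integral_of_dominated_convergence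
    (μ := MeasureTheory.volume) (fun m _ => (1 / 2 : ℝ) ^ m / 2) (fun m => by fun_prop)
    (fun m => Eventually.of_forall (hbound m))
    (Eventually.of_forall fun _ _ => summable_geometric_two.div_const 2)
    intervalIntegrable_const (Eventually.of_forall hgeom)
  rw [integral_one_div_one_add_sq, arctan_neg, arctan_one, sub_neg_eq_add,
    show π / 4 + π / 4 = π / 2 by ring] at h
  rwa [funext eulerTerm_eq_integral]

namespace GammaCF

noncomputable def b (n : ℕ) : ℝ := ((n : ℝ) + 1) * (1 - 2 * n)

noncomputable def a (n : ℕ) : ℝ := 3 * (n : ℝ) + 3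

noncomputable def q (n : ℕ) : ℝ := ((n : ℝ) + 1) * ∏ i ∈ range n, (2 * (i : ℝ) + 3)

noncomputable def conv (n : ℕ) : ℝ := ∑ m ∈ range n, eulerTerm m + 2 * eulerTerm n - 2

theorem q_pos (n : ℕ) : 0 < q n := by
  have hP : 0 < ∏ i ∈ range n, (2 * (i : ℝ) + 3) := prod_pos fun i _ => by positivity
  unfold q
  positivity

theorem q_succ_add_mul_pos (n : ℕ) {x : ℝ} (hx : -((n : ℝ) + 2) < x) :
    0 < q (n + 1) + q n * x := by
  have hn : (0 : ℝ) ≤ n := n.cast_nonneg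
  have hfactor : ((n : ℝ) + 1) * (q (n + 1) + q n * x) =
      q n * ((n + 2) * (2 * n + 3) + (n + 1) * x) := by
    simp only [q, prod_range_succ]
    push_cast
    ring
  have hpos : 0 < q n * ((n + 2) * (2 * n + 3) + (n + 1) * x) := mul_pos (q_pos n) (by nlinarith)
  exact pos_of_mul_pos_right (hfactor ▸ hpos) (by positivity)

theorem q_rec (n : ℕ) : q (n + 2) = a (n + 2) * q (n + 1) + b (n + 2) * q n := by
  simp only [q, a, b, prod_range_succ]
  push_cast
  ring

theorem conv_rec (n : ℕ) :
    q (n + 2) * conv (n + 2) =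
      a (n + 2) * (q (n + 1) * conv (n + 1)) + b (n + 2) * (q n * conv n) := by
  have h1 := eulerTerm_succ n
  have h2 := eulerTerm_succ (n + 1)
  simp only [q, a, b, conv, prod_range_succ, sum_range_succ, h2, h1]
  push_cast
  field_simp
  ring

theorem a_add_pos (N : ℕ) {x : ℝ} (hx : -((N : ℝ) + 3) < x) : 0 < a (N + 2) + x := by
  simp only [a]
  push_cast
  linarith [N.cast_nonneg (α := ℝ)]

theorem lt_b_div_a_add (N : ℕ) {x : ℝ} (hx : -((N : ℝ) + 3) < x) :
    -((N : ℝ) + 2) < b (N + 2) / (a (N + 2) + x) := by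
  have hn : (0 : ℝ) ≤ N := N.cast_nonneg
  rw [lt_div_iff₀ (a_add_pos N hx)]
  simp only [a, b]
  push_cast
  nlinarith

theorem cf_eq_conv (N : ℕ) : cf b a N = conv N := by
  rw [cf_eq_div_of_recurrence (p := fun n => q n * conv n) (by simp [q, conv, eulerTerm])
    (by simp [q]) (by norm_num [q, conv, eulerTerm, b]) (by norm_num [q, a]) conv_rec q_rec
    (fun n => Set.Ioi (-((n : ℝ) + 2)))
    (fun n => by simp only [Set.mem_Ioi, neg_lt_zero]; positivity)
    (fun n x hx => by
      have hx' : -((n : ℝ) + 3) < x := by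
        simp only [Set.mem_Ioi, Nat.cast_succ] at hx
        linarith
      exact ⟨(a_add_pos n hx').ne', lt_b_div_a_add n hx'⟩)
    (fun n x hx => (q_succ_add_mul_pos n hx).ne'),
    mul_div_cancel_left₀ _ (q_pos N).ne']

end GammaCF

theorem cf_gamma_special :
    Tendsto
      (cf (fun n => ((n : ℝ) + 1) * (1 - 2 * n)) (fun n => 3 * (n : ℝ) + 3)) atTop
      (nhds (Real.pi / 2 - 2)) := by
  have hconv : Tendsto GammaCF.conv atTop (nhds (π / 2 + 2 * 0 - 2)) :=
    (hasSum_eulerTerm.tendsto_sum_nat.add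
      (hasSum_eulerTerm.summable.tendsto_atTop_zero.const_mul 2)).sub_const 2
  rw [mul_zero, add_zero] at hconv
  exact hconv.congr fun N => (GammaCF.cf_eq_conv N).symm
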